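/- Let y = Φ x_S + e' with supp(x_S) ⊆ S, |S| = s, and let z_p minimize ‖y − Φz‖₂ over z supported in T, |T| = t > s. Let T_∇ ⊆ T be the set of indices of the t−s smallest magnitude entries of z_p within T. Then ‖(x_S)_{T_∇}‖₂ ≤ √2·‖(x_S − z_p)_T‖₂ ≤ √2·δ_{s+t}·‖x_S − z_p‖₂ + √(2(1+δ_t))·‖e'‖₂. -/

import Mathlib

open Finset Matrix

noncomputable def enorm' {n : ℕ} (x : Fin n → ℝ) : ℝ := Real.sqrt (∑ i, (x i)^2)

def restrict {n : ℕ} (U : Finset (Fin n)) (x : Fin n → ℝ) : Fin n → ℝ :=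
  fun i => if i ∈ U then x i else 0

def sparse {n : ℕ} (s : ℕ) (x : Fin n → ℝ) : Prop :=
  ∃ S : Finset (Fin n), S.card ≤ s ∧ ∀ i ∉ S, x i = 0

noncomputable def supp {n : ℕ} (x : Fin n → ℝ) : Finset (Fin n) := Finset.univ.filter (fun i => x i ≠ 0)

def RIP {m N : ℕ} (Φ : Matrix (Fin m) (Fin N) ℝ) (s : ℕ) (δ : ℝ) : Prop :=
  ∀ x : Fin N → ℝ, sparse s x →
    (1 - δ) * (enorm' x)^2 ≤ (enorm' (Φ.mulVec x))^2 ∧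
    (enorm' (Φ.mulVec x))^2 ≤ (1 + δ) * (enorm' x)^2

/-!
Write `d = x_S - z_p` and `v = d_T`. The least-squares residual `y - Φ z_p = Φ d + e'` is
orthogonal to `Φ v`, so `⟨Φ v, Φ d⟩ = -⟨Φ v, e'⟩ ≤ √(1 + δ_t) ‖v‖ ‖e'‖`; combined with the
polarized RIP bound `⟨v, d⟩ - δ_{s+t} ‖v‖ ‖d‖ ≤ ⟨Φ v, Φ d⟩` and `⟨v, d⟩ = ‖v‖²` this gives the
second inequality. For the first, only `T_∇ ∩ S` carries mass of `x_S`; it can be matched with an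
equally large part of `T \ (S ∪ T_∇)`, where `z_p = -d` and `|z_p|` is at least as large, and
`x² ≤ 2 (x - z)² + 2 z²` finishes.
-/

section EuclideanNorm

variable {n : ℕ}

lemma enorm'_eq_norm (x : Fin n → ℝ) : enorm' x = ‖WithLp.toLp 2 x‖ := by
  simp [enorm', EuclideanSpace.norm_eq]

lemma dotProduct_eq_inner (x y : Fin n → ℝ) :
    x ⬝ᵥ y = inner ℝ (WithLp.toLp 2 x) (WithLp.toLp 2 y) := by
  simp [EuclideanSpace.inner_toLp_toLp, dotProduct_comm]

lemma enorm'_nonneg (x : Fin n → ℝ) : 0 ≤ enorm' x := Real.sqrt_nonneg _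

lemma enorm'_eq_zero {x : Fin n → ℝ} : enorm' x = 0 ↔ x = 0 := by
  simp [enorm'_eq_norm]

lemma enorm'_sq (x : Fin n → ℝ) : enorm' x ^ 2 = x ⬝ᵥ x := by
  rw [enorm'_eq_norm, dotProduct_eq_inner, real_inner_self_eq_norm_sq]

lemma abs_dotProduct_le (x y : Fin n → ℝ) : |x ⬝ᵥ y| ≤ enorm' x * enorm' y := by
  rw [dotProduct_eq_inner, enorm'_eq_norm, enorm'_eq_norm]
  exact abs_real_inner_le_norm _ _

lemma enorm'_add_sq (x y : Fin n → ℝ) :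
    enorm' (x + y) ^ 2 = enorm' x ^ 2 + 2 * (x ⬝ᵥ y) + enorm' y ^ 2 := by
  simp only [enorm'_sq, add_dotProduct, dotProduct_add, dotProduct_comm y x]
  ring

lemma enorm'_sub_sq (x y : Fin n → ℝ) :
    enorm' (x - y) ^ 2 = enorm' x ^ 2 - 2 * (x ⬝ᵥ y) + enorm' y ^ 2 := by
  simp only [enorm'_sq, sub_dotProduct, dotProduct_sub, dotProduct_comm y x]
  ring

lemma enorm'_smul_sq (c : ℝ) (x : Fin n → ℝ) : enorm' (c • x) ^ 2 = c ^ 2 * enorm' x ^ 2 := by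
  simp only [enorm'_sq, smul_dotProduct, dotProduct_smul, smul_eq_mul]
  ring

lemma enorm'_restrict (U : Finset (Fin n)) (x : Fin n → ℝ) :
    enorm' (_root_.restrict U x) = √(∑ i ∈ U, x i ^ 2) := by
  simp only [enorm', _root_.restrict, ite_pow, ne_eq, OfNat.ofNat_ne_zero, not_false_eq_true,
    zero_pow, sum_ite_mem, univ_inter]

lemma restrict_dotProduct_self (U : Finset (Fin n)) (x : Fin n → ℝ) :
    _root_.restrict U x ⬝ᵥ x = enorm' (_root_.restrict U x) ^ 2 := by
  rw [enorm'_sq]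
  refine sum_congr rfl fun i _ => ?_
  by_cases hi : i ∈ U <;> simp [_root_.restrict, hi]

end EuclideanNorm

namespace RIP

variable {m N k : ℕ} {Φ : Matrix (Fin m) (Fin N) ℝ} {δ : ℝ}

lemma nonneg (h : RIP Φ k δ) (hk : 0 < k) (i : Fin N) : 0 ≤ δ := by
  have hsparse : sparse k (Pi.single i 1) :=
    ⟨{i}, (card_singleton i).trans_le hk, fun j hj => by simp_all⟩
  have hone : enorm' (Pi.single i (1 : ℝ)) ^ 2 = 1 := by simp [enorm'_sq]
  have := h _ hsparse
  rw [hone] at this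
  linarith [this.1, this.2]

lemma enorm'_mulVec_le (h : RIP Φ k δ) {x : Fin N → ℝ} (hx : sparse k x) :
    enorm' (Φ *ᵥ x) ≤ √(1 + δ) * enorm' x :=
  calc enorm' (Φ *ᵥ x) = √(enorm' (Φ *ᵥ x) ^ 2) := (Real.sqrt_sq (enorm'_nonneg _)).symm
    _ ≤ √((1 + δ) * enorm' x ^ 2) := Real.sqrt_le_sqrt (h x hx).2
    _ = √(1 + δ) * enorm' x := by
      rw [Real.sqrt_mul' _ (sq_nonneg _), Real.sqrt_sq (enorm'_nonneg _)]

lemma two_mul_dotProduct_sub_le (h : RIP Φ k δ) {U : Finset (Fin N)} (hU : #U ≤ k)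
    {u w : Fin N → ℝ} (hu : ∀ i ∉ U, u i = 0) (hw : ∀ i ∉ U, w i = 0) :
    2 * (u ⬝ᵥ w) - δ * (enorm' u ^ 2 + enorm' w ^ 2) ≤ 2 * ((Φ *ᵥ u) ⬝ᵥ (Φ *ᵥ w)) := by
  have hadd := (h (u + w) ⟨U, hU, fun i hi => by simp [hu i hi, hw i hi]⟩).1
  have hsub := (h (u - w) ⟨U, hU, fun i hi => by simp [hu i hi, hw i hi]⟩).2
  rw [mulVec_add, enorm'_add_sq, enorm'_add_sq] at hadd
  rw [mulVec_sub, enorm'_sub_sq, enorm'_sub_sq] at hsub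
  linarith

lemma dotProduct_sub_le (h : RIP Φ k δ) {U : Finset (Fin N)} (hU : #U ≤ k)
    {u w : Fin N → ℝ} (hu : ∀ i ∉ U, u i = 0) (hw : ∀ i ∉ U, w i = 0) :
    u ⬝ᵥ w - δ * enorm' u * enorm' w ≤ (Φ *ᵥ u) ⬝ᵥ (Φ *ᵥ w) := by
  rcases (enorm'_nonneg u).eq_or_lt with hu0 | hu0
  · obtain rfl : u = 0 := enorm'_eq_zero.mp hu0.symm
    simp [← hu0]
  rcases (enorm'_nonneg w).eq_or_lt with hw0 | hw0
  · obtain rfl : w = 0 := enorm'_eq_zero.mp hw0.symm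
    simp [← hw0]
  have := h.two_mul_dotProduct_sub_le hU (u := enorm' w • u) (w := enorm' u • w)
    (fun i hi => by simp [hu i hi]) (fun i hi => by simp [hw i hi])
  simp only [enorm'_smul_sq, mulVec_smul, smul_dotProduct, dotProduct_smul, smul_eq_mul] at this
  nlinarith [mul_pos hu0 hw0]

end RIP

lemma dotProduct_mulVec_eq_zero_of_forall_enorm'_le {m N : ℕ} {Φ : Matrix (Fin m) (Fin N) ℝ}
    {T : Finset (Fin N)} {y : Fin m → ℝ} {z₀ : Fin N → ℝ} (hz₀ : ∀ i ∉ T, z₀ i = 0)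
    (hmin : ∀ z : Fin N → ℝ, (∀ i ∉ T, z i = 0) → enorm' (y - Φ *ᵥ z₀) ≤ enorm' (y - Φ *ᵥ z))
    {w : Fin N → ℝ} (hw : ∀ i ∉ T, w i = 0) : (y - Φ *ᵥ z₀) ⬝ᵥ (Φ *ᵥ w) = 0 := by
  have hquad (ε : ℝ) :
      2 * ε * ((y - Φ *ᵥ z₀) ⬝ᵥ (Φ *ᵥ w)) ≤ ε ^ 2 * enorm' (Φ *ᵥ w) ^ 2 := by
    have hle := hmin (z₀ + ε • w) fun i hi => by simp [hz₀ i hi, hw i hi]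
    rw [mulVec_add, mulVec_smul, ← sub_sub] at hle
    have := pow_le_pow_left₀ (enorm'_nonneg _) hle 2
    rw [enorm'_sub_sq (y - Φ *ᵥ z₀), enorm'_smul_sq, dotProduct_smul, smul_eq_mul] at this
    linarith
  have hq : 0 ≤ enorm' (Φ *ᵥ w) ^ 2 := sq_nonneg _
  generalize (y - Φ *ᵥ z₀) ⬝ᵥ (Φ *ᵥ w) = c at hquad ⊢
  generalize enorm' (Φ *ᵥ w) ^ 2 = q at hquad hq
  have hq1 : 0 < q + 1 := by linarith
  -- `ε = c / (q + 1)` gives `2 c² (q + 1) ≤ c² q`.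
  have := hquad (c / (q + 1))
  field_simp at this
  nlinarith [sq_nonneg c]

lemma Finset.sum_le_sum_of_card_eq_of_forall_le {ι M : Type*} [AddCommMonoid M] [LinearOrder M]
    [IsOrderedAddMonoid M] {A B : Finset ι} (f : ι → M) (hcard : #A = #B)
    (hle : ∀ i ∈ A, ∀ j ∈ B, f i ≤ f j) : ∑ i ∈ A, f i ≤ ∑ j ∈ B, f j := by
  rcases A.eq_empty_or_nonempty with rfl | hA
  · rw [card_empty, eq_comm, card_eq_zero] at hcard
    simp [hcard]
  calc ∑ i ∈ A, f i ≤ #A • A.sup' hA f := A.sum_le_card_nsmul f _ fun i hi => A.le_sup' f hi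
    _ = #B • A.sup' hA f := by rw [hcard]
    _ ≤ ∑ j ∈ B, f j := B.card_nsmul_le_sum f _ fun j hj => sup'_le hA f fun i hi => hle i hi j hj

lemma Finset.card_inter_le_card_sdiff_sdiff {ι : Type*} [DecidableEq ι] {S T L : Finset ι}
    (hcard : #L + #S ≤ #T) : #(L ∩ S) ≤ #((T \ S) \ L) := by
  have := card_sdiff_add_card_inter L S
  have := card_sdiff_add_card_inter (T \ S) L
  have := card_le_card_sdiff_add_card (s := T) (t := S)
  have : #((T \ S) ∩ L) ≤ #(L \ S) :=
    card_le_card fun i => by simp only [mem_inter, mem_sdiff]; tauto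
  omega

lemma sum_sq_le_two_mul_sum_sq_sub {ι : Type*} [DecidableEq ι] {S T L : Finset ι} {x z : ι → ℝ}
    (hx : ∀ i ∉ S, x i = 0) (hLT : L ⊆ T) (hcard : #L + #S ≤ #T)
    (hsmall : ∀ i ∈ L, ∀ j ∈ T \ L, |z i| ≤ |z j|) :
    ∑ i ∈ L, x i ^ 2 ≤ 2 * ∑ i ∈ T, (x i - z i) ^ 2 := by
  obtain ⟨P, hPX, hPcard⟩ := exists_subset_card_eq (card_inter_le_card_sdiff_sdiff hcard)
  set A := L ∩ S
  have hPT : P ⊆ T := fun j hj => (mem_sdiff.mp (mem_sdiff.mp (hPX hj)).1).1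
  have hxP : ∀ j ∈ P, x j = 0 := fun j hj => hx j (mem_sdiff.mp (mem_sdiff.mp (hPX hj)).1).2
  have hdisj : Disjoint A P := disjoint_left.mpr fun i hiA hiP =>
    (mem_sdiff.mp (mem_sdiff.mp (hPX hiP)).1).2 (mem_inter.mp hiA).2
  have hLA : ∑ i ∈ L, x i ^ 2 = ∑ i ∈ A, x i ^ 2 :=
    (sum_subset inter_subset_left fun i hiL hiA => by
      rw [hx i fun hiS => hiA (mem_inter.mpr ⟨hiL, hiS⟩)]; simp).symm
  have hAP : ∑ i ∈ A, z i ^ 2 ≤ ∑ j ∈ P, (x j - z j) ^ 2 :=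
    (sum_le_sum_of_card_eq_of_forall_le _ hPcard.symm fun i hi j hj =>
      sq_le_sq.mpr (hsmall i (mem_inter.mp hi).1 j
        (mem_sdiff.mpr ⟨hPT hj, (mem_sdiff.mp (hPX hj)).2⟩))).trans_eq
      (sum_congr rfl fun j hj => by rw [hxP j hj, zero_sub, neg_sq])
  calc ∑ i ∈ L, x i ^ 2 = ∑ i ∈ A, x i ^ 2 := hLA
    _ ≤ ∑ i ∈ A, (2 * (x i - z i) ^ 2 + 2 * z i ^ 2) :=
      sum_le_sum fun i _ => by nlinarith [sq_nonneg (x i - 2 * z i)]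
    _ = 2 * ∑ i ∈ A, (x i - z i) ^ 2 + 2 * ∑ i ∈ A, z i ^ 2 := by
      rw [sum_add_distrib, mul_sum, mul_sum]
    _ ≤ 2 * ∑ i ∈ A, (x i - z i) ^ 2 + 2 * ∑ j ∈ P, (x j - z j) ^ 2 := by gcongr
    _ = 2 * ∑ i ∈ A ∪ P, (x i - z i) ^ 2 := by rw [sum_union hdisj]; ring
    _ ≤ 2 * ∑ i ∈ T, (x i - z i) ^ 2 := by
      gcongr
      exact union_subset (inter_subset_left.trans hLT) hPT

lemma enorm'_restrict_sub_le {m N s t : ℕ} {Φ : Matrix (Fin m) (Fin N) ℝ} {δst δt : ℝ}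
    (hst : RIP Φ (s + t) δst) (ht : RIP Φ t δt) (hδst : 0 ≤ δst)
    {S T : Finset (Fin N)} (hS : #S ≤ s) (hT : #T ≤ t)
    {xS zp : Fin N → ℝ} {e y : Fin m → ℝ} (hxS : ∀ i ∉ S, xS i = 0) (hzp : ∀ i ∉ T, zp i = 0)
    (hy : y = Φ *ᵥ xS + e)
    (hmin : ∀ z : Fin N → ℝ, (∀ i ∉ T, z i = 0) → enorm' (y - Φ *ᵥ zp) ≤ enorm' (y - Φ *ᵥ z)) :
    enorm' (_root_.restrict T (xS - zp)) ≤ δst * enorm' (xS - zp) + √(1 + δt) * enorm' e := by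
  set d := xS - zp
  set v := _root_.restrict T d
  have hv : ∀ i ∉ T, v i = 0 := fun i hi => if_neg hi
  have hvU : ∀ i ∉ S ∪ T, v i = 0 := fun i hi => hv i fun hiT => hi (mem_union_right S hiT)
  have hdU : ∀ i ∉ S ∪ T, d i = 0 := fun i hi => by
    simp only [mem_union, not_or] at hi
    simp [d, hxS i hi.1, hzp i hi.2]
  have hUcard : #(S ∪ T) ≤ s + t := (card_union_le S T).trans (add_le_add hS hT)
  have horth : (Φ *ᵥ v) ⬝ᵥ (Φ *ᵥ d) = -((Φ *ᵥ v) ⬝ᵥ e) := by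
    have h := dotProduct_mulVec_eq_zero_of_forall_enorm'_le hzp hmin hv
    rw [show y - Φ *ᵥ zp = Φ *ᵥ d + e by rw [hy, mulVec_sub]; abel, add_dotProduct,
      dotProduct_comm, dotProduct_comm e] at h
    linarith
  have hnoise : -((Φ *ᵥ v) ⬝ᵥ e) ≤ √(1 + δt) * enorm' v * enorm' e :=
    calc -((Φ *ᵥ v) ⬝ᵥ e) ≤ enorm' (Φ *ᵥ v) * enorm' e := (neg_le_abs _).trans (abs_dotProduct_le _ _)
      _ ≤ √(1 + δt) * enorm' v * enorm' e :=
        mul_le_mul_of_nonneg_right (ht.enorm'_mulVec_le ⟨T, hT, hv⟩) (enorm'_nonneg e)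
  have hsq : enorm' v * enorm' v ≤ enorm' v * (δst * enorm' d + √(1 + δt) * enorm' e) := by
    have := hst.dotProduct_sub_le hUcard hvU hdU
    rw [restrict_dotProduct_self] at this
    linarith
  rcases (enorm'_nonneg v).eq_or_lt with hv0 | hv0
  · rw [← hv0]
    exact add_nonneg (mul_nonneg hδst (enorm'_nonneg d))
      (mul_nonneg (Real.sqrt_nonneg _) (enorm'_nonneg e))
  · exact le_of_mul_le_mul_left hsq hv0

theorem stmt9_general {m N : ℕ} (Φ : Matrix (Fin m) (Fin N) ℝ) (s t : ℕ) (δst δt : ℝ)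
    (hst : RIP Φ (s+t) δst) (ht : RIP Φ t δt) (hts : s < t)
    (S T : Finset (Fin N)) (hS : S.card = s) (hT : T.card = t)
    (xS : Fin N → ℝ) (hxS : ∀ i ∉ S, xS i = 0)
    (e' y : Fin m → ℝ) (hy : y = fun i => Φ.mulVec xS i + e' i)
    (zp : Fin N → ℝ) (hzp : ∀ i ∉ T, zp i = 0)
    (hmin : ∀ z : Fin N → ℝ, (∀ i ∉ T, z i = 0) →
      enorm' (fun i => y i - Φ.mulVec zp i) ≤ enorm' (fun i => y i - Φ.mulVec z i))
    (Tnab : Finset (Fin N)) (hsub : Tnab ⊆ T) (hcard : Tnab.card = t - s)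
    (hsmall : ∀ i ∈ Tnab, ∀ j ∈ T \ Tnab, |zp i| ≤ |zp j|) :
    enorm' (restrict Tnab xS) ≤ Real.sqrt 2 * enorm' (restrict T (fun i => xS i - zp i)) ∧
    Real.sqrt 2 * enorm' (restrict T (fun i => xS i - zp i)) ≤
      Real.sqrt 2 * δst * enorm' (fun i => xS i - zp i) +
      Real.sqrt (2*(1+δt)) * enorm' e' := by
  obtain ⟨i₀, -⟩ : T.Nonempty := by rw [← card_pos, hT]; omega
  have hδst : 0 ≤ δst := hst.nonneg (by omega) i₀
  constructor
  · rw [enorm'_restrict, enorm'_restrict, ← Real.sqrt_mul zero_le_two]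
    exact Real.sqrt_le_sqrt (sum_sq_le_two_mul_sum_sq_sub hxS hsub (by omega) hsmall)
  · rw [Real.sqrt_mul zero_le_two, mul_assoc, mul_assoc, ← mul_add]
    gcongr
    exact enorm'_restrict_sub_le hst ht hδst hS.le hT.le hxS hzp hy hmin

theorem stmt9 {m N : ℕ} (Φ : Matrix (Fin m) (Fin N) ℝ) (s t : ℕ) (δst δt : ℝ)
    (hst : RIP Φ (s+t) δst) (ht : RIP Φ t δt) (hδ : δst < 1) (hts : s < t)
    (S T : Finset (Fin N)) (hS : S.card = s) (hT : T.card = t)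
    (xS : Fin N → ℝ) (hxS : ∀ i ∉ S, xS i = 0)
    (e' y : Fin m → ℝ) (hy : y = fun i => Φ.mulVec xS i + e' i)
    (zp : Fin N → ℝ) (hzp : ∀ i ∉ T, zp i = 0)
    (hmin : ∀ z : Fin N → ℝ, (∀ i ∉ T, z i = 0) →
      enorm' (fun i => y i - Φ.mulVec zp i) ≤ enorm' (fun i => y i - Φ.mulVec z i))
    (Tnab : Finset (Fin N)) (hsub : Tnab ⊆ T) (hcard : Tnab.card = t - s)
    (hsmall : ∀ i ∈ Tnab, ∀ j ∈ T \ Tnab, |zp i| ≤ |zp j|) :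
    enorm' (restrict Tnab xS) ≤ Real.sqrt 2 * enorm' (restrict T (fun i => xS i - zp i)) ∧
    Real.sqrt 2 * enorm' (restrict T (fun i => xS i - zp i)) ≤
      Real.sqrt 2 * δst * enorm' (fun i => xS i - zp i) +
      Real.sqrt (2*(1+δt)) * enorm' e' :=
  stmt9_general Φ s t δst δt hst ht hts S T hS hT xS hxS e' y hy zp hzp hmin Tnab hsub hcard hsmall
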